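/- If f ∈ e_{-α}C^s(T^n_α) for an integer s ≥ 0, then for all m ∈ Z^n \ {0}, |F_α(f)(m)| ≤ (√n / (2π|csc α|))^s · max_{|β| = s} |F_α[e_{-α} ∂^β(e_α f)](m)| / |m|^s, and consequently |F_α(f)(m)| (1 + |m|^s) → 0 as |m| → ∞. -/

import Mathlib

open MeasureTheory Filter

noncomputable section

/-- The fractional torus, realized as the cube `[-|sin α|/2, |sin α|/2]^n`. -/
def Tor (α : ℝ) (n : ℕ) : Set (Fin n → ℝ) :=
  Set.univ.pi fun _ => Set.Icc (-(|Real.sin α| / 2)) (|Real.sin α| / 2)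

/-- The chirp `e_α(x) = e^{π i |x|² cot α}`. -/
def eA (α : ℝ) {n : ℕ} (x : Fin n → ℝ) : ℂ :=
  Complex.exp (Complex.I * ((Real.pi * (∑ i, x i ^ 2) * (Real.cos α / Real.sin α) : ℝ) : ℂ))

/-- `A_α = √(1 - i cot α)`. -/
def Acoef (α : ℝ) : ℂ := (1 - Complex.I * ((Real.cos α / Real.sin α : ℝ) : ℂ)) ^ (1 / 2 : ℂ)

/-- The kernel `K_α(m,x) = A_α^n e_α(x) e^{-2π i (m·x) csc α} e_α(m)`. -/
def Kk (α : ℝ) {n : ℕ} (m : Fin n → ℤ) (x : Fin n → ℝ) : ℂ :=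
  Acoef α ^ n * eA α x *
    Complex.exp (-(Complex.I * ((2 * Real.pi * (∑ i, (m i : ℝ) * x i) / Real.sin α : ℝ) : ℂ))) *
    eA α fun i => (m i : ℝ)

/-- The `m`-th fractional Fourier coefficient of order `α`. -/
def Fcoef (α : ℝ) {n : ℕ} (f : (Fin n → ℝ) → ℂ) (m : Fin n → ℤ) : ℂ :=
  ∫ x in Tor α n, f x * Kk α m x

/-- `|sin α|`-periodicity in every coordinate. -/
def Per (α : ℝ) {n : ℕ} (f : (Fin n → ℝ) → ℂ) : Prop :=
  ∀ (x : Fin n → ℝ) (k : Fin n → ℤ), f (fun i => x i + k i * |Real.sin α|) = f x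

/-- The iterated partial derivative `∂^β` for a multi-index `β`. -/
def pderivM {n : ℕ} (β : Fin n → ℕ) : ((Fin n → ℝ) → ℂ) → ((Fin n → ℝ) → ℂ) :=
  (List.ofFn fun i : Fin n =>
    (fun g : (Fin n → ℝ) → ℂ => fun x => fderiv ℝ g x (Pi.single i 1))^[β i]).foldr
    (· ∘ ·) id

/-!
Write `g = e_α f`. Then `F_α(f)(m) = A_α^n e_α(m) ĝ(m)` with `|e_α(m)| = 1`, where
`ĝ(m) = ∫_{T^n_α} 𝐞(-⟨m, x⟩ / sin α) g(x) dx` is an ordinary Fourier coefficient of the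
`|sin α|`-periodic function `g`.
Integrating by parts `s` times in the direction of a largest coordinate `m_i` (the boundary terms
cancel by periodicity) multiplies it by `(2π i m_i / sin α)^s`, and `|m| ≤ √n |m_i|`. The decay
follows from the Riemann–Lebesgue lemma, applied to `g` and to the `∂_i^s g`.
-/

open scoped FourierTransform Topology

theorem Real.fourierChar_intCast (k : ℤ) : 𝐞 (k : ℝ) = 1 := by
  ext
  rw [Real.fourierChar_apply, Circle.coe_one, ← Complex.exp_int_mul_two_pi_mul_I k]
  push_cast
  ring_nf

theorem Real.fourierChar_add_intCast (t : ℝ) (k : ℤ) : 𝐞 (t + k) = 𝐞 t := by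
  rw [AddChar.map_add_eq_mul, Real.fourierChar_intCast, mul_one]

theorem integral_fderiv_single_eq_zero_of_periodic {n : ℕ} {E : Type*} [NormedAddCommGroup E]
    [NormedSpace ℝ E] [CompleteSpace E] {a b : Fin n → ℝ} (hab : a ≤ b)
    {φ : (Fin n → ℝ) → E} (hφ : ContDiff ℝ 1 φ) (i : Fin n)
    (hper : ∀ x, φ (x + Pi.single i (b i - a i)) = φ x) :
    ∫ x in Set.Icc a b, fderiv ℝ φ x (Pi.single i 1) = 0 := by
  cases n with
  | zero => exact i.elim0
  | succ N =>
  let F : (Fin (N + 1) → ℝ) → Fin (N + 1) → E := fun x => Pi.single i (φ x)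
  let F' : (Fin (N + 1) → ℝ) → (Fin (N + 1) → ℝ) →L[ℝ] Fin (N + 1) → E :=
    fun x => (ContinuousLinearMap.single ℝ (fun _ => E) i).comp (fderiv ℝ φ x)
  have hF : ∀ x, HasFDerivAt F (F' x) x := fun x =>
    (ContinuousLinearMap.single ℝ (fun _ => E) i).hasFDerivAt.comp x
      ((hφ.differentiable one_ne_zero) x).hasFDerivAt
  have hdiv : ∀ x, ∑ j, F' x (Pi.single j 1) j = fderiv ℝ φ x (Pi.single i 1) := fun x => by
    simp [F', Pi.single_apply]
  have hface : ∀ j y, F (j.insertNth (b j) y) j = F (j.insertNth (a j) y) j := by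
    intro j y
    rcases eq_or_ne j i with rfl | hj
    · have hshift : j.insertNth (b j) y
          = j.insertNth (a j) y + Pi.single (M := fun _ => ℝ) j (b j - a j) := by
        ext k
        rcases Fin.eq_self_or_eq_succAbove j k with rfl | ⟨k, rfl⟩ <;> simp
      simp only [F, hshift, hper]
    · simp [F, Pi.single_eq_of_ne hj]
  have hcont : Continuous fun x => fderiv ℝ φ x (Pi.single i 1) :=
    (hφ.continuous_fderiv one_ne_zero).clm_apply continuous_const
  have hdivergence := integral_divergence_of_hasFDerivAt_off_countable a b hab F F' ∅
    Set.countable_empty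
    (continuous_iff_continuousAt.2 fun x => (hF x).continuousAt).continuousOn (fun x _ => hF x)
    ((hcont.continuousOn.integrableOn_compact isCompact_Icc).congr_fun (fun x _ => (hdiv x).symm)
      measurableSet_Icc)
  simpa [hdiv, hface] using hdivergence

theorem foldr_comp_ofFn_eq_of_forall_ne_eq_id {β : Type*} :
    ∀ {n : ℕ} (F : Fin n → β → β) (i : Fin n), (∀ j, j ≠ i → F j = id) →
      (List.ofFn F).foldr (· ∘ ·) id = F i
  | 0, _, i, _ => i.elim0
  | n + 1, F, i, hF => by
    rw [List.ofFn_succ, List.foldr_cons]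
    cases i using Fin.cases with
    | zero =>
      have hid : ∀ j : Fin n, F j.succ = id := fun j => hF _ (Fin.succ_ne_zero j)
      have hrep : ∀ k, (List.replicate k (id : β → β)).foldr (· ∘ ·) id = id := fun k => by
        induction k <;> simp [List.replicate_succ, *]
      simp [hid, hrep]
    | succ i =>
      rw [hF 0 (Fin.succ_ne_zero i).symm, foldr_comp_ofFn_eq_of_forall_ne_eq_id _ i
        fun j hj => hF _ (Fin.succ_injective _ |>.ne hj)]
      rfl

theorem sqrt_sum_sq_le_sqrt_card_mul_abs {n : ℕ} (v : Fin n → ℝ) (i : Fin n)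
    (hi : ∀ j, |v j| ≤ |v i|) : √(∑ j, v j ^ 2) ≤ √n * |v i| := by
  have hsum : ∑ j, v j ^ 2 ≤ n * v i ^ 2 := by
    simpa using Finset.sum_le_card_nsmul Finset.univ (fun j => v j ^ 2) (v i ^ 2)
      fun j _ => sq_le_sq.2 (hi j)
  calc √(∑ j, v j ^ 2) ≤ √(n * v i ^ 2) := Real.sqrt_le_sqrt hsum
    _ = √n * |v i| := by rw [Real.sqrt_mul n.cast_nonneg, Real.sqrt_sq_eq_abs]

theorem Tor_eq_Icc (α : ℝ) (n : ℕ) :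
    Tor α n = Set.Icc (fun _ => -(|Real.sin α| / 2)) (fun _ => |Real.sin α| / 2) :=
  Set.pi_univ_Icc _ _

theorem isCompact_Tor (α : ℝ) (n : ℕ) : IsCompact (Tor α n) :=
  isCompact_univ_pi fun _ => isCompact_Icc

theorem measurableSet_Tor (α : ℝ) (n : ℕ) : MeasurableSet (Tor α n) :=
  MeasurableSet.univ_pi fun _ => measurableSet_Icc

def partialDeriv {n : ℕ} (i : Fin n) (g : (Fin n → ℝ) → ℂ) : (Fin n → ℝ) → ℂ :=
  fun x => fderiv ℝ g x (Pi.single i 1)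

theorem ContDiff.partialDeriv {n k : ℕ} {g : (Fin n → ℝ) → ℂ} (hg : ContDiff ℝ (k + 1) g)
    (i : Fin n) : ContDiff ℝ k (partialDeriv i g) :=
  (hg.fderiv_right (by norm_cast)).clm_apply contDiff_const

theorem pderivM_single {n : ℕ} (i : Fin n) (s : ℕ) :
    pderivM (Pi.single i s) = (partialDeriv i)^[s] :=
  (foldr_comp_ofFn_eq_of_forall_ne_eq_id _ i fun j hj => by simp [hj]).trans (by simp; rfl)

theorem Per.add_single {α : ℝ} {n : ℕ} {g : (Fin n → ℝ) → ℂ} (hg : Per α g) (i : Fin n)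
    (x : Fin n → ℝ) : g (x + Pi.single i |Real.sin α|) = g x := by
  convert hg x (Pi.single i 1) using 2
  ext j
  rcases eq_or_ne j i with rfl | hj <;> simp [*]

theorem Per.partialDeriv {α : ℝ} {n : ℕ} {g : (Fin n → ℝ) → ℂ} (hg : Per α g) (i : Fin n) :
    Per α (partialDeriv i g) := fun x k => by
  have hshift : (fun y => g (y + fun j => k j * |Real.sin α|)) = g := funext fun y => hg y k
  change fderiv ℝ g (x + fun j => k j * |Real.sin α|) _ = _
  rw [← fderiv_comp_add_right, hshift]
  rfl

-- `𝐞 (-freq α m x)` is the factor `e^{-2π i (m·x) csc α}` of the kernel `Kk`.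
def freq (α : ℝ) {n : ℕ} (m : Fin n → ℤ) : (Fin n → ℝ) →L[ℝ] ℝ :=
  ∑ j, ((m j : ℝ) / Real.sin α) • ContinuousLinearMap.proj j

theorem freq_apply (α : ℝ) {n : ℕ} (m : Fin n → ℤ) (x : Fin n → ℝ) :
    freq α m x = ∑ j, (m j : ℝ) / Real.sin α * x j := by
  simp [freq]

theorem freq_single (α : ℝ) {n : ℕ} (m : Fin n → ℤ) (i : Fin n) (t : ℝ) :
    freq α m (Pi.single i t) = (m i : ℝ) / Real.sin α * t := by
  simp [freq_apply, Pi.single_apply]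

theorem fourierChar_neg_freq_add_single {α : ℝ} (hs : Real.sin α ≠ 0) {n : ℕ} (m : Fin n → ℤ)
    (i : Fin n) (x : Fin n → ℝ) :
    𝐞 (-freq α m (x + Pi.single i |Real.sin α|)) = 𝐞 (-freq α m x) := by
  obtain ⟨k, hk⟩ : ∃ k : ℤ, freq α m (Pi.single i |Real.sin α|) = k := by
    rw [freq_single]
    rcases abs_choice (Real.sin α) with h | h <;> rw [h]
    · exact ⟨m i, by field_simp⟩
    · exact ⟨-m i, by push_cast; field_simp⟩
  rw [map_add, hk, neg_add, ← Int.cast_neg, Real.fourierChar_add_intCast]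

theorem hasFDerivAt_fourierChar_neg_freq (α : ℝ) {n : ℕ} (m : Fin n → ℤ) (x : Fin n → ℝ) :
    HasFDerivAt (fun x => (𝐞 (-freq α m x) : ℂ))
      ((-2 * Real.pi * Complex.I * 𝐞 (-freq α m x)) • (Complex.ofRealCLM ∘L freq α m)) x :=
  Real.hasFDerivAt_fourierChar_neg_bilinear_right (ContinuousLinearMap.id ℝ _) (freq α m) x

theorem fourierChar_neg_freq_eq_exp (α : ℝ) {n : ℕ} (m : Fin n → ℤ) (x : Fin n → ℝ) :
    (𝐞 (-freq α m x) : ℂ) = Complex.exp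
      (-(Complex.I * ((2 * Real.pi * (∑ i, (m i : ℝ) * x i) / Real.sin α : ℝ) : ℂ))) := by
  have hsum : ∑ j, (m j : ℝ) / Real.sin α * x j = (∑ j, (m j : ℝ) * x j) / Real.sin α := by
    rw [Finset.sum_div]
    exact Finset.sum_congr rfl fun j _ => by ring
  rw [Real.fourierChar_apply, freq_apply, hsum]
  push_cast
  ring_nf

def planeWaveCoef (α : ℝ) {n : ℕ} (h : (Fin n → ℝ) → ℂ) (m : Fin n → ℤ) : ℂ :=
  ∫ x in Tor α n, (𝐞 (-freq α m x) : ℂ) * h x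

theorem planeWaveCoef_partialDeriv {α : ℝ} (hs : Real.sin α ≠ 0) {n : ℕ}
    {h : (Fin n → ℝ) → ℂ} (hC : ContDiff ℝ 1 h) (hP : Per α h) (i : Fin n) (m : Fin n → ℤ) :
    planeWaveCoef α (partialDeriv i h) m
      = 2 * Real.pi * Complex.I * ((m i / Real.sin α : ℝ) : ℂ) * planeWaveCoef α h m := by
  set w : (Fin n → ℝ) → ℂ := fun x => 𝐞 (-freq α m x)
  have hw : ContDiff ℝ 1 w := Complex.contDiff_exp.comp
    ((Complex.ofRealCLM.contDiff.comp (contDiff_const.mul (freq α m).contDiff.neg)).mul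
      contDiff_const)
  have hdiff : ∀ x, fderiv ℝ (fun x => w x * h x) x (Pi.single i 1)
      = -(2 * Real.pi * Complex.I * ((m i / Real.sin α : ℝ) : ℂ)) * (w x * h x)
        + w x * partialDeriv i h x := by
    intro x
    have hd : HasFDerivAt (fun x => w x * h x) _ x := (hasFDerivAt_fourierChar_neg_freq α m x).mul
      ((hC.differentiable one_ne_zero) x).hasFDerivAt
    rw [hd.fderiv]
    simp [partialDeriv, freq_single, w]
    ring
  have hzero := integral_fderiv_single_eq_zero_of_periodic
    (a := fun _ => -(|Real.sin α| / 2)) (b := fun _ => |Real.sin α| / 2)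
    (fun _ => by linarith [abs_nonneg (Real.sin α)]) (hw.mul hC) i
    (fun x => by
      simp only [sub_neg_eq_add, add_halves, w, fourierChar_neg_freq_add_single hs, hP.add_single])
  have hint : ∀ g : (Fin n → ℝ) → ℂ, Continuous g → IntegrableOn g (Tor α n) := fun g hg =>
    hg.continuousOn.integrableOn_compact (isCompact_Tor α n)
  rw [← Tor_eq_Icc, setIntegral_congr_fun (measurableSet_Tor α n) (fun x _ => hdiff x),
    integral_add, integral_const_mul] at hzero
  · unfold planeWaveCoef
    linear_combination hzero
  · exact hint _ (continuous_const.mul (hw.continuous.mul hC.continuous))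
  · exact hint _ (hw.continuous.mul ((hC.continuous_fderiv one_ne_zero).clm_apply continuous_const))

theorem planeWaveCoef_iterate_partialDeriv {α : ℝ} (hs : Real.sin α ≠ 0) {n : ℕ} (i : Fin n)
    (m : Fin n → ℤ) (k : ℕ) {h : (Fin n → ℝ) → ℂ} (hC : ContDiff ℝ k h) (hP : Per α h) :
    planeWaveCoef α ((partialDeriv i)^[k] h) m
      = (2 * Real.pi * Complex.I * ((m i / Real.sin α : ℝ) : ℂ)) ^ k * planeWaveCoef α h m := by
  induction k generalizing h with
  | zero => simp
  | succ k ih =>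
    rw [Function.iterate_succ_apply, ih (hC.partialDeriv i) (hP.partialDeriv i),
      planeWaveCoef_partialDeriv hs (hC.of_le (by norm_cast; omega)) hP]
    ring

theorem tendsto_freq_cofinite_cocompact {α : ℝ} (hs : Real.sin α ≠ 0) (n : ℕ) :
    Tendsto (freq α (n := n)) cofinite (cocompact _) := by
  let ℓ : (Fin n → ℝ) →ₗ[ℝ] (Fin n → ℝ) →L[ℝ] ℝ :=
    ∑ j, (LinearMap.proj j).smulRight ((Real.sin α)⁻¹ • ContinuousLinearMap.proj j)
  have hℓ : ∀ v i, ℓ v (Pi.single i 1) = v i / Real.sin α := fun v i => by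
    simp [ℓ, Pi.single_apply, div_eq_mul_inv]
  have hker : LinearMap.ker ℓ = ⊥ := by
    refine LinearMap.ker_eq_bot'.2 fun v hv => funext fun i => ?_
    have hvi := hℓ v i
    rw [hv] at hvi
    exact (div_eq_zero_iff.1 hvi.symm).resolve_right hs
  have hfreq : freq α (n := n) = ℓ ∘ Pi.map fun _ => ((↑) : ℤ → ℝ) := by
    ext m x
    simp [ℓ, freq_apply, div_eq_mul_inv, mul_assoc]
  rw [hfreq, ← cocompact_eq_cofinite]
  exact (LinearMap.isClosedEmbedding_of_injective hker).tendsto_cocompact.comp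
    (Topology.IsClosedEmbedding.piMap fun _ => Int.isClosedEmbedding_coe_real).tendsto_cocompact

theorem tendsto_planeWaveCoef_cofinite {α : ℝ} (hs : Real.sin α ≠ 0) {n : ℕ}
    (h : (Fin n → ℝ) → ℂ) : Tendsto (planeWaveCoef α h) cofinite (𝓝 0) := by
  refine ((tendsto_integral_exp_smul_cocompact ((Tor α n).indicator h) volume).comp
    (tendsto_freq_cofinite_cocompact hs n)).congr fun m => ?_
  rw [Function.comp_apply, planeWaveCoef, ← integral_indicator (measurableSet_Tor α n)]
  congr with v
  by_cases hv : v ∈ Tor α n <;> simp [hv, Circle.smul_def]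

theorem eA_ne_zero (α : ℝ) {n : ℕ} (x : Fin n → ℝ) : eA α x ≠ 0 := Complex.exp_ne_zero _

theorem norm_eA (α : ℝ) {n : ℕ} (x : Fin n → ℝ) : ‖eA α x‖ = 1 := by
  rw [eA, mul_comm, Complex.norm_exp_ofReal_mul_I]

theorem Fcoef_inv_mul (α : ℝ) {n : ℕ} (h : (Fin n → ℝ) → ℂ) (m : Fin n → ℤ) :
    Fcoef α (fun x => (eA α x)⁻¹ * h x) m
      = Acoef α ^ n * eA α (fun i => (m i : ℝ)) * planeWaveCoef α h m := by
  rw [Fcoef, planeWaveCoef, ← integral_const_mul]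
  congr 1 with x
  rw [Kk, ← fourierChar_neg_freq_eq_exp]
  have hx := eA_ne_zero α x
  field_simp

theorem norm_Fcoef_inv_mul (α : ℝ) {n : ℕ} (h : (Fin n → ℝ) → ℂ) (m : Fin n → ℤ) :
    ‖Fcoef α (fun x => (eA α x)⁻¹ * h x) m‖ = ‖Acoef α‖ ^ n * ‖planeWaveCoef α h m‖ := by
  rw [Fcoef_inv_mul, norm_mul, norm_mul, norm_pow, norm_eA, mul_one]

theorem norm_Fcoef (α : ℝ) {n : ℕ} (f : (Fin n → ℝ) → ℂ) (m : Fin n → ℤ) :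
    ‖Fcoef α f m‖ = ‖Acoef α‖ ^ n * ‖planeWaveCoef α (fun x => eA α x * f x) m‖ := by
  rw [← norm_Fcoef_inv_mul]
  simp [eA_ne_zero]

theorem tendsto_Fcoef_cofinite {α : ℝ} (hs : Real.sin α ≠ 0) {n : ℕ} (f : (Fin n → ℝ) → ℂ) :
    Tendsto (fun m => ‖Fcoef α f m‖) cofinite (𝓝 0) := by
  simpa [norm_Fcoef] using
    ((tendsto_planeWaveCoef_cofinite hs (fun x => eA α x * f x)).norm.const_mul (‖Acoef α‖ ^ n))

instance (n s : ℕ) : Finite {β : Fin n → ℕ // ∑ i, β i = s} := by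
  simpa [Finset.Nat.mem_antidiagonalTuple] using
    (Finset.Nat.antidiagonalTuple n s).finite_toSet.to_subtype

theorem exists_norm_Fcoef_mul_le {α : ℝ} (hs : Real.sin α ≠ 0) {n : ℕ}
    {f : (Fin n → ℝ) → ℂ} {s : ℕ} (hper : Per α fun x => eA α x * f x)
    (hsm : ContDiff ℝ s fun x => eA α x * f x) {m : Fin n → ℤ} (hm : m ≠ 0) :
    ∃ i, ‖Fcoef α f m‖ * √(∑ j, (m j : ℝ) ^ 2) ^ s
      ≤ (√n / (2 * Real.pi * |Real.sin α|⁻¹)) ^ s *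
        ‖Fcoef α (fun x => (eA α x)⁻¹ * pderivM (Pi.single i s) (fun z => eA α z * f z) x) m‖ := by
  have : Nonempty (Fin n) := ⟨(Function.ne_iff.1 hm).choose⟩
  obtain ⟨i, hi⟩ := Finite.exists_max fun j => |(m j : ℝ)|
  refine ⟨i, ?_⟩
  have hc : ‖2 * Real.pi * Complex.I * ((m i / Real.sin α : ℝ) : ℂ)‖
      = 2 * Real.pi * |Real.sin α|⁻¹ * |(m i : ℝ)| := by
    rw [show 2 * Real.pi * Complex.I * ((m i / Real.sin α : ℝ) : ℂ)
        = ((2 * Real.pi * (m i / Real.sin α) : ℝ) : ℂ) * Complex.I by push_cast; ring,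
      Complex.norm_mul, Complex.norm_I, mul_one, Complex.norm_real, Real.norm_eq_abs, abs_mul,
      abs_mul, abs_div, abs_of_pos Real.pi_pos, abs_two, div_eq_mul_inv]
    ring
  have hC : 0 < 2 * Real.pi * |Real.sin α|⁻¹ := by positivity
  generalize 2 * Real.pi * |Real.sin α|⁻¹ = C at hc hC ⊢
  rw [pderivM_single, norm_Fcoef_inv_mul, planeWaveCoef_iterate_partialDeriv hs i m s hsm hper,
    norm_mul, norm_pow, hc, norm_Fcoef]
  calc _ ≤ ‖Acoef α‖ ^ n * ‖planeWaveCoef α (fun x => eA α x * f x) m‖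
        * (√n * |(m i : ℝ)|) ^ s := by
        gcongr
        exact sqrt_sum_sq_le_sqrt_card_mul_abs _ i hi
    _ = _ := by
        rw [div_pow, mul_pow, mul_pow]
        field_simp

theorem stmt19 (α : ℝ) (hα : ∀ k : ℤ, α ≠ k * Real.pi) (n : ℕ)
    (f : (Fin n → ℝ) → ℂ) (s : ℕ)
    (hper : Per α fun x => eA α x * f x)
    (hsm : ContDiff ℝ ((s : ℕ) : ℕ∞) fun x => eA α x * f x) :
    (∀ m : Fin n → ℤ, m ≠ 0 →
      ‖Fcoef α f m‖ * Real.sqrt (∑ i, (m i : ℝ) ^ 2) ^ s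
        ≤ (Real.sqrt n / (2 * Real.pi * |Real.sin α|⁻¹)) ^ s *
            ⨆ β : {β : Fin n → ℕ // ∑ i, β i = s},
              ‖Fcoef α (fun x => (eA α x)⁻¹ * pderivM β.1 (fun z => eA α z * f z) x) m‖) ∧
    Tendsto
      (fun m : Fin n → ℤ => ‖Fcoef α f m‖ * (1 + Real.sqrt (∑ i, (m i : ℝ) ^ 2) ^ s))
      cofinite (nhds 0) := by
  have hs : Real.sin α ≠ 0 := Real.sin_ne_zero_iff.2 fun k hk => hα k hk.symm
  set K := (Real.sqrt n / (2 * Real.pi * |Real.sin α|⁻¹)) ^ s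
  have hK : 0 ≤ K := by positivity
  refine ⟨fun m hm => ?_, ?_⟩
  · obtain ⟨i, hi⟩ := exists_norm_Fcoef_mul_le hs hper hsm hm
    exact hi.trans (mul_le_mul_of_nonneg_left
      (le_ciSup_of_le (Set.finite_range _).bddAbove ⟨Pi.single i s, by simp⟩ le_rfl) hK)
  have hbound : ∀ᶠ m in cofinite, ‖Fcoef α f m‖ * Real.sqrt (∑ i, (m i : ℝ) ^ 2) ^ s
      ≤ K * ∑ i, ‖Fcoef α
          (fun x => (eA α x)⁻¹ * pderivM (Pi.single i s) (fun z => eA α z * f z) x) m‖ := by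
    filter_upwards [eventually_cofinite_ne 0] with m hm
    obtain ⟨i, hi⟩ := exists_norm_Fcoef_mul_le hs hper hsm hm
    exact hi.trans (mul_le_mul_of_nonneg_left
      (Finset.single_le_sum (f := fun j => ‖Fcoef α
        (fun x => (eA α x)⁻¹ * pderivM (Pi.single j s) (fun z => eA α z * f z) x) m‖)
        (fun j _ => norm_nonneg _) (Finset.mem_univ i)) hK)
  have hsum := (tendsto_finsetSum Finset.univ fun i _ => tendsto_Fcoef_cofinite hs
    (fun x => (eA α x)⁻¹ * pderivM (Pi.single i s) (fun z => eA α z * f z) x)).const_mul K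
  simp only [Finset.sum_const_zero, mul_zero] at hsum
  simpa [mul_add] using (tendsto_Fcoef_cofinite hs f).add
    (squeeze_zero' (Eventually.of_forall fun m => by positivity) hbound hsum)
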